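/- arXiv:1503.02753 — 5 statements merged into one kernel-verified Lean document; each statement's English description precedes it below -/
import Mathlib

section
/- Let Q ∈ ℝ^{n×n} be symmetric positive definite, A ∈ ℝ^{n×n} nonsingular, b ∈ ℝⁿ. If u ∈ ℝⁿ satisfies (AᵀQA − I)u⁺ + u + Aᵀb = 0, then the point Au⁺ minimizes the function x ↦ (1/2)xᵀQx + xᵀb over the simplicial cone A·ℝⁿ₊. -/
noncomputable section

/-- `E n` is the n-dimensional Euclidean space over ℝ. -/
abbrev E (n : ℕ) := EuclideanSpace ℝ (Fin n)

variable {n : ℕ}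

/-- componentwise positive part `x⁺` -/
def posPart (x : E n) : E n := WithLp.toLp 2 (fun i => max (x i) 0)

/-- componentwise negative part `x⁻` -/
def negPart (x : E n) : E n := WithLp.toLp 2 (fun i => max (-(x i)) 0)

/-- the 0-1 vector `sgn(x⁺)` indicating positive components of `x` -/
def sgnPos (x : E n) : Fin n → ℝ := fun i => if 0 < x i then 1 else 0

/-- matrix-vector multiplication on Euclidean space -/
def mulV (M : Matrix (Fin n) (Fin n) ℝ) (x : E n) : E n := Matrix.toEuclideanLin M x

/-- operator norm of a matrix induced by the Euclidean norm -/
def opN (M : Matrix (Fin n) (Fin n) ℝ) : ℝ :=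
  ‖LinearMap.toContinuousLinearMap (Matrix.toEuclideanLin M)‖

/-- the nonnegative orthant ℝⁿ₊ -/
def nonnegOrthant (n : ℕ) : Set (E n) := {x | ∀ i, 0 ≤ x i}

/-- the simplicial cone A·ℝⁿ₊ -/
def simplicialCone (A : Matrix (Fin n) (Fin n) ℝ) : Set (E n) :=
  {y | ∃ x ∈ nonnegOrthant n, y = mulV A x}

/-- the dual cone K* of a set K -/
def dualCone (K : Set (E n)) : Set (E n) := {y | ∀ x ∈ K, 0 ≤ (inner ℝ y x : ℝ)}

/-! With `x = A u⁺` and `g = Q x + b` the gradient of the objective at `x`, the equation for `u`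
says exactly `Aᵀ g = u⁻`. Hence `⟪g, A w⟫ = ⟪u⁻, w⟫ ≥ 0` for `w ≥ 0`, so `g` lies in the dual of the
cone `A·ℝⁿ₊`, and `⟪g, x⟫ = ⟪u⁻, u⁺⟫ = 0`. These are the optimality conditions of the convex
quadratic over the cone; sufficiency comes from the gradient inequality
`f x + ⟪∇f x, y - x⟫ ≤ f y`. -/

section QuadraticMinimization

variable {F : Type*} [NormedAddCommGroup F] [InnerProductSpace ℝ F]

theorem LinearMap.IsPositive.quadratic_add_inner_le {T : F →ₗ[ℝ] F} (hT : T.IsPositive)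
    (b x y : F) :
    (1/2 : ℝ) * inner ℝ x (T x) + inner ℝ x b + inner ℝ (T x + b) (y - x) ≤
      (1/2 : ℝ) * inner ℝ y (T y) + inner ℝ y b := by
  have hsymm : inner ℝ x (T y) = inner ℝ y (T x) := by
    rw [← hT.isSymmetric x y, real_inner_comm]
  have hsq := hT.inner_nonneg_right (y - x)
  simp only [map_sub, inner_sub_left, inner_sub_right, inner_add_left] at hsq ⊢
  linarith [real_inner_comm (T x) y, real_inner_comm (T x) x, real_inner_comm b y,
    real_inner_comm b x]

theorem LinearMap.IsPositive.isMinOn_of_inner_gradient {T : F →ₗ[ℝ] F} (hT : T.IsPositive)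
    (b : F) {K : Set F} {x : F} (hK : ∀ y ∈ K, 0 ≤ inner ℝ (T x + b) y)
    (hx : inner ℝ (T x + b) x = 0) :
    IsMinOn (fun y => (1/2 : ℝ) * inner ℝ y (T y) + inner ℝ y b) K x := by
  rw [isMinOn_iff]
  intro y hy
  have := hT.quadratic_add_inner_le b x y
  rw [inner_sub_right, hx] at this
  linarith [hK y hy]

end QuadraticMinimization

theorem mulV_mul (M N : Matrix (Fin n) (Fin n) ℝ) (x : E n) :
    mulV (M * N) x = mulV M (mulV N x) := by
  simp [mulV]

theorem mulV_add (M : Matrix (Fin n) (Fin n) ℝ) (x y : E n) :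
    mulV M (x + y) = mulV M x + mulV M y :=
  map_add _ x y

theorem mulV_sub_one (M : Matrix (Fin n) (Fin n) ℝ) (x : E n) :
    mulV (M - 1) x = mulV M x - x := by
  simp [mulV]

theorem inner_mulV_transpose (A : Matrix (Fin n) (Fin n) ℝ) (x y : E n) :
    inner ℝ (mulV A.transpose x) y = inner ℝ x (mulV A y) := by
  rw [mulV, ← Matrix.conjTranspose_eq_transpose_of_trivial,
    Matrix.toEuclideanLin_conjTranspose_eq_adjoint, LinearMap.adjoint_inner_left]
  rfl

theorem posPart_apply (u : E n) (i : Fin n) : posPart u i = (u i)⁺ := rfl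

theorem negPart_apply (u : E n) (i : Fin n) : negPart u i = (u i)⁻ := rfl

theorem posPart_sub_self (u : E n) : posPart u - u = negPart u := by
  ext i
  rw [PiLp.sub_apply, posPart_apply, negPart_apply]
  linarith [posPart_sub_negPart (u i)]

theorem inner_posPart_negPart (u : E n) : inner ℝ (posPart u) (negPart u) = 0 := by
  rw [PiLp.inner_apply]
  refine Finset.sum_eq_zero fun i _ => ?_
  rw [posPart_apply, negPart_apply, RCLike.inner_apply, conj_trivial]
  rcases le_total (u i) 0 with h | h
  · simp [posPart_eq_zero.2 h]
  · simp [negPart_eq_zero.2 h]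

theorem posPart_mem_nonnegOrthant (u : E n) : posPart u ∈ nonnegOrthant n :=
  fun _ => le_max_right _ _

theorem negPart_mem_nonnegOrthant (u : E n) : negPart u ∈ nonnegOrthant n :=
  fun _ => le_max_right _ _

theorem inner_nonneg_of_mem_nonnegOrthant {x y : E n} (hx : x ∈ nonnegOrthant n)
    (hy : y ∈ nonnegOrthant n) : 0 ≤ inner ℝ x y := by
  rw [PiLp.inner_apply]
  exact Finset.sum_nonneg fun i _ => mul_nonneg (hy i) (hx i)

theorem mem_dualCone_simplicialCone {A : Matrix (Fin n) (Fin n) ℝ} {g : E n}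
    (hg : mulV A.transpose g ∈ nonnegOrthant n) : g ∈ dualCone (simplicialCone A) := by
  rintro _ ⟨w, hw, rfl⟩
  rw [← inner_mulV_transpose]
  exact inner_nonneg_of_mem_nonnegOrthant hg hw

theorem stmt4_general (Q A : Matrix (Fin n) (Fin n) ℝ) (hQ : Q.PosDef)
    (b u : E n)
    (hu : mulV (A.transpose * Q * A - 1) (posPart u) + u + mulV A.transpose b = 0) :
    mulV A (posPart u) ∈ simplicialCone A ∧
    ∀ y ∈ simplicialCone A,
      (1/2 : ℝ) * (inner ℝ (mulV A (posPart u)) (mulV Q (mulV A (posPart u))) : ℝ) +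
          (inner ℝ (mulV A (posPart u)) b : ℝ) ≤
        (1/2 : ℝ) * (inner ℝ y (mulV Q y) : ℝ) + (inner ℝ y b : ℝ) := by
  have hgrad : mulV A.transpose (mulV Q (mulV A (posPart u)) + b) = negPart u := by
    rw [mulV_sub_one, mulV_mul, mulV_mul] at hu
    rw [← posPart_sub_self, mulV_add, ← sub_eq_zero, ← hu]
    abel
  refine ⟨⟨posPart u, posPart_mem_nonnegOrthant u, rfl⟩, fun y hy => ?_⟩
  refine (Matrix.isPositive_toEuclideanLin_iff.mpr hQ.posSemidef).isMinOn_of_inner_gradient b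
    (mem_dualCone_simplicialCone (hgrad ▸ negPart_mem_nonnegOrthant u)) ?_ hy
  change inner ℝ (mulV Q (mulV A (posPart u)) + b) (mulV A (posPart u)) = 0
  rw [← inner_mulV_transpose, hgrad, real_inner_comm, inner_posPart_negPart]

theorem stmt4 (Q A : Matrix (Fin n) (Fin n) ℝ) (hQ : Q.PosDef) (hA : IsUnit A.det)
    (b u : E n)
    (hu : mulV (A.transpose * Q * A - 1) (posPart u) + u + mulV A.transpose b = 0) :
    mulV A (posPart u) ∈ simplicialCone A ∧
    ∀ y ∈ simplicialCone A,
      (1/2 : ℝ) * (inner ℝ (mulV A (posPart u)) (mulV Q (mulV A (posPart u))) : ℝ) +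
          (inner ℝ (mulV A (posPart u)) b : ℝ) ≤
        (1/2 : ℝ) * (inner ℝ y (mulV Q y) : ℝ) + (inner ℝ y b : ℝ) :=
  stmt4_general Q A hQ b u hu
end
end

section
/- Let Q ∈ ℝ^{n×n} be symmetric positive definite and A ∈ ℝ^{n×n} nonsingular. Then for every x ∈ ℝⁿ the matrix S(x) := (AᵀQA − I)·diag(sgn(x⁺)) + I is nonsingular. -/
noncomputable section

variable {n : ℕ}

/-! With `M := AᵀQA` positive definite and `P := diag(sgn(x⁺))` a symmetric idempotent,
suppose `((M - 1)P + 1)v = 0` and put `u := Pv`. Then `Mu = u - v`, and `P = PᵀP` gives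
`uᵀu = uᵀv`, so `uᵀMu = 0`. Hence `u = 0`, and then `v = u - Mu = 0`. -/

namespace Matrix

variable {ι R : Type*} [Fintype ι]

theorem IsHermitian.star_mulVec_dotProduct_mulVec_of_isIdempotentElem [CommRing R] [StarRing R]
    {P : Matrix ι ι R} (hP : P.IsHermitian) (hPP : IsIdempotentElem P) (v : ι → R) :
    star (P *ᵥ v) ⬝ᵥ (P *ᵥ v) = star (P *ᵥ v) ⬝ᵥ v := by
  rw [star_mulVec, ← dotProduct_mulVec, ← dotProduct_mulVec, mulVec_mulVec, hP.eq, hPP.eq]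

theorem PosDef.isUnit_det_sub_one_mul_add_one [DecidableEq ι] [Field R] [PartialOrder R]
    [StarRing R] {M P : Matrix ι ι R} (hM : M.PosDef) (hP : P.IsHermitian)
    (hPP : IsIdempotentElem P) :
    IsUnit ((M - 1) * P + 1).det := by
  refine isUnit_iff_ne_zero.mpr fun hdet => ?_
  obtain ⟨v, hv, hker⟩ := exists_mulVec_eq_zero_iff.mpr hdet
  set u := P *ᵥ v
  have hMu : M *ᵥ u = u - v := by
    rw [add_mulVec, one_mulVec, sub_mul, one_mul, sub_mulVec, ← mulVec_mulVec] at hker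
    linear_combination hker
  have hu : u = 0 := by
    by_contra hu
    have hpos := hM.dotProduct_mulVec_pos hu
    rw [hMu, dotProduct_sub, hP.star_mulVec_dotProduct_mulVec_of_isIdempotentElem hPP,
      sub_self] at hpos
    exact hpos.false
  rw [hu, mulVec_zero, zero_sub, zero_eq_neg] at hMu
  exact hv hMu

end Matrix

theorem isIdempotentElem_sgnPos (x : E n) : IsIdempotentElem (sgnPos x) := by
  funext i
  by_cases h : 0 < x i <;> simp [sgnPos, h]

theorem stmt7 (Q A : Matrix (Fin n) (Fin n) ℝ) (hQ : Q.PosDef) (hA : IsUnit A.det)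
    (x : E n) :
    IsUnit ((A.transpose * Q * A - 1) * Matrix.diagonal (sgnPos x) + 1).det := by
  have hAQA : (A.transpose * Q * A).PosDef := hQ.conjTranspose_mul_mul_same
    (Matrix.mulVec_injective_iff_isUnit.mpr (A.isUnit_iff_isUnit_det.mpr hA))
  exact hAQA.isUnit_det_sub_one_mul_add_one (Matrix.isHermitian_diagonal _)
    ((isIdempotentElem_sgnPos x).map (Matrix.diagonalRingHom (Fin n) ℝ))
end
end

section
/- Let D ∈ ℝ^{n×n} be a diagonal matrix with diagonal entries in {0,1}, Q symmetric positive definite, A nonsingular. If ((AᵀQA − I)D + I)u = 0 then u = 0. (Key step: AᵀQADu = (D − I)u forces ‖LᵀADu‖² = ⟨(D² − D)u, u⟩ = 0 where Q = LLᵀ.) -/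
noncomputable section

variable {n : ℕ}

namespace Matrix

open scoped ComplexOrder

variable {ι 𝕜 : Type*} [Fintype ι] [RCLike 𝕜]

theorem star_mulVec_dotProduct_mulVec_self_of_isIdempotentElem {D : Matrix ι ι 𝕜}
    (hD : D.IsHermitian) (hDD : IsIdempotentElem D) (u : ι → 𝕜) :
    star (D *ᵥ u) ⬝ᵥ (D *ᵥ u) = star (D *ᵥ u) ⬝ᵥ u := by
  rw [star_mulVec, dotProduct_mulVec, vecMul_vecMul, hD.eq, hDD.eq]

variable [DecidableEq ι]

theorem PosDef.eq_zero_of_sub_one_mul_add_one_mulVec_eq_zero {P D : Matrix ι ι 𝕜} (hP : P.PosDef)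
    (hD : D.IsHermitian) (hDD : IsIdempotentElem D) {u : ι → 𝕜}
    (h : ((P - 1) * D + 1) *ᵥ u = 0) : u = 0 := by
  have hPD : P *ᵥ (D *ᵥ u) = D *ᵥ u - u := by
    rw [add_mulVec, ← mulVec_mulVec, sub_mulVec, one_mulVec, one_mulVec] at h
    linear_combination (norm := module) h
  have hquad : star (D *ᵥ u) ⬝ᵥ (P *ᵥ (D *ᵥ u)) = 0 := by
    rw [hPD, dotProduct_sub, star_mulVec_dotProduct_mulVec_self_of_isIdempotentElem hD hDD,
      sub_self]
  have hDu : D *ᵥ u = 0 := by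
    by_contra hne
    exact (hP.dotProduct_mulVec_pos hne).ne' hquad
  simpa [hDu] using hPD.symm

theorem IsDiag.isIdempotentElem_of_diag_eq_zero_or_one {R : Type*} [Semiring R]
    {D : Matrix ι ι R} (hD : D.IsDiag) (h01 : ∀ i, D i i = 0 ∨ D i i = 1) :
    IsIdempotentElem D := by
  rw [IsIdempotentElem, ← hD.diagonal_diag, diagonal_mul_diagonal]
  congr 1
  funext i
  rcases h01 i with h | h <;> simp [h]

end Matrix

theorem stmt8 (D Q A : Matrix (Fin n) (Fin n) ℝ)
    (hDdiag : ∀ i j, i ≠ j → D i j = 0) (hD01 : ∀ i, D i i = 0 ∨ D i i = 1)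
    (hQ : Q.PosDef) (hA : IsUnit A.det) (u : E n)
    (h : mulV ((A.transpose * Q * A - 1) * D + 1) u = 0) : u = 0 := by
  have hDiag : D.IsDiag := hDdiag
  have hP : (A.transpose * Q * A).PosDef := by
    simpa using hQ.conjTranspose_mul_mul_same
      (Matrix.mulVec_injective_of_isUnit ((A.isUnit_iff_isUnit_det).mpr hA))
  have hD : D.IsHermitian := (D.conjTranspose_eq_transpose_of_trivial).trans hDiag.isSymm
  have hu := hP.eq_zero_of_sub_one_mul_add_one_mulVec_eq_zero hD
    (hDiag.isIdempotentElem_of_diag_eq_zero_or_one hD01) (congrArg WithLp.ofLp h)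
  exact WithLp.ofLp_injective 2 hu
end
end

section
/- Let M ∈ ℝ^{n×n}, b ∈ ℝⁿ, define F(x) := (M − I)x⁺ + x + b and S(x) := (M − I)·diag(sgn(x⁺)) + I. Then for all x, y ∈ ℝⁿ, ‖F(x) − F(y) − S(y)(x − y)‖ ≤ ‖M − I‖·‖x − y‖. -/
noncomputable section

variable {n : ℕ}

/-! The residual `F x - F y - S y (x - y)` equals `(M - 1) r` with
`r = x⁺ - y⁺ - diag (sgn y⁺) (x - y)`, so it suffices that `|r i| ≤ |x i - y i|`.
If `y i > 0` then `r i = (-x i)⁺`, and if `y i ≤ 0` then `r i = (x i)⁺`; in both cases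
`r i` vanishes unless `x i` and `y i` lie on opposite sides of `0`, and then it is at most
the distance from `x i` to `y i`. -/

lemma mulV_mul_add_one (A D : Matrix (Fin n) (Fin n) ℝ) (v : E n) :
    mulV (A * D + 1) v = mulV A (mulV D v) + v := by
  simp [mulV]

lemma mulV_diagonal_apply (d : Fin n → ℝ) (v : E n) (i : Fin n) :
    mulV (Matrix.diagonal d) v i = d i * v i := by
  simp [mulV, Matrix.toLpLin_apply, Matrix.mulVec_diagonal]

lemma norm_mulV_le (A : Matrix (Fin n) (Fin n) ℝ) (v : E n) : ‖mulV A v‖ ≤ opN A * ‖v‖ :=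
  (LinearMap.toContinuousLinearMap (Matrix.toEuclideanLin A)).le_opNorm v

lemma EuclideanSpace.norm_le_norm_of_abs_le {ι : Type*} [Fintype ι] {u v : EuclideanSpace ℝ ι}
    (h : ∀ i, |u i| ≤ |v i|) : ‖u‖ ≤ ‖v‖ := by
  simp only [EuclideanSpace.norm_eq, Real.norm_eq_abs]
  exact Real.sqrt_le_sqrt (Finset.sum_le_sum fun i _ => pow_le_pow_left₀ (abs_nonneg _) (h i) 2)

lemma abs_max_zero_sub_max_zero_sub_le (a b : ℝ) :
    |max a 0 - max b 0 - (if 0 < b then 1 else 0) * (a - b)| ≤ |a - b| := by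
  split_ifs with hb
  · rw [max_eq_left hb.le, one_mul, abs_le]
    constructor <;> cases max_cases a 0 <;> linarith [le_abs_self (a - b), neg_abs_le (a - b)]
  · rw [not_lt] at hb
    rw [max_eq_right hb, zero_mul, sub_zero, sub_zero, abs_of_nonneg (le_max_right a 0)]
    exact max_le (by linarith [le_abs_self (a - b)]) (abs_nonneg _)

lemma norm_posPart_sub_posPart_sub_le (x y : E n) :
    ‖posPart x - posPart y - mulV (Matrix.diagonal (sgnPos y)) (x - y)‖ ≤ ‖x - y‖ :=
  EuclideanSpace.norm_le_norm_of_abs_le fun i => by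
    simpa [_root_.posPart, mulV_diagonal_apply, sgnPos] using
      abs_max_zero_sub_max_zero_sub_le (x i) (y i)

theorem stmt11 (M : Matrix (Fin n) (Fin n) ℝ) (b : E n) (x y : E n) :
    ‖(mulV (M - 1) (posPart x) + x + b) - (mulV (M - 1) (posPart y) + y + b) -
        mulV ((M - 1) * Matrix.diagonal (sgnPos y) + 1) (x - y)‖ ≤
      opN (M - 1) * ‖x - y‖ := by
  have residual : (mulV (M - 1) (posPart x) + x + b) - (mulV (M - 1) (posPart y) + y + b) -
      mulV ((M - 1) * Matrix.diagonal (sgnPos y) + 1) (x - y) =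
      mulV (M - 1) (posPart x - posPart y - mulV (Matrix.diagonal (sgnPos y)) (x - y)) := by
    rw [mulV_mul_add_one]
    simp only [mulV, map_sub]
    abel
  rw [residual]
  exact (norm_mulV_le _ _).trans
    (mul_le_mul_of_nonneg_left (norm_posPart_sub_posPart_sub_le x y) (norm_nonneg _))
end
end

section
/- Let Q be symmetric positive definite, A nonsingular, b ∈ ℝⁿ. The semi-smooth Newton sequence defined by ((AᵀQA − I)·diag(sgn(x_k⁺)) + I)x_{k+1} = −Aᵀb is bounded for any starting point x₀ ∈ ℝⁿ. -/
noncomputable section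

variable {n : ℕ}

/-!
Put `P = AᵀQA`, which is positive definite. For every diagonal `D` with entries in `[0, 1]`
the matrix `(P - 1) D + 1` is invertible: if `((P - 1) D + 1) v = 0` then `u = D v` satisfies
`uᵀ P u = uᵀ u - uᵀ v = ∑ dᵢ (dᵢ - 1) vᵢ² ≤ 0`, so `u = 0` and then `v = u - P u = 0`.
Hence each iterate `x (k + 1)` is one of the finitely many vectors `-((P - 1) D + 1)⁻¹ Aᵀ b`
with `D` a `0`-`1` diagonal, and the sequence is bounded.
-/

open Matrix

namespace Matrix.PosDef

variable {ι : Type*} [Fintype ι] [DecidableEq ι]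

lemma isUnit_det_sub_one_mul_diagonal_add_one {P : Matrix ι ι ℝ} (hP : P.PosDef) {d : ι → ℝ}
    (hd : ∀ i, d i ∈ Set.Icc (0 : ℝ) 1) : IsUnit ((P - 1) * diagonal d + 1).det := by
  rw [isUnit_iff_ne_zero]
  intro hdet
  obtain ⟨v, hv0, hv⟩ := exists_mulVec_eq_zero_iff.2 hdet
  set u := diagonal d *ᵥ v with hu
  have hPu : P *ᵥ u = u - v := by
    rw [add_mulVec, one_mulVec, ← mulVec_mulVec, sub_mulVec, one_mulVec, ← hu] at hv
    linear_combination hv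
  have hquad : u ⬝ᵥ (P *ᵥ u) ≤ 0 := by
    rw [hPu, dotProduct_sub]
    simp only [hu, dotProduct, mulVec_diagonal, ← Finset.sum_sub_distrib]
    refine Finset.sum_nonpos fun i _ => ?_
    have : d i * (d i - 1) * v i ^ 2 ≤ 0 :=
      mul_nonpos_of_nonpos_of_nonneg
        (mul_nonpos_of_nonneg_of_nonpos (hd i).1 (by linarith [(hd i).2])) (sq_nonneg _)
    linear_combination this
  have hu0 : u = 0 := by
    by_contra hne
    have := hP.dotProduct_mulVec_pos hne
    rw [star_trivial] at this
    linarith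
  exact hv0 (by simpa [hu0] using hPu)

end Matrix.PosDef

lemma exists_norm_le_of_succ_mem_finite {V : Type*} [SeminormedAddCommGroup V] {x : ℕ → V}
    {S : Set V} (hS : S.Finite) (hx : ∀ k, x (k + 1) ∈ S) : ∃ C, ∀ k, ‖x k‖ ≤ C := by
  have hrange : Set.range x ⊆ insert (x 0) S := by
    rintro _ ⟨_ | k, rfl⟩
    exacts [Set.mem_insert _ _, Set.mem_insert_of_mem _ (hx k)]
  obtain ⟨C, hC⟩ := isBounded_iff_forall_norm_le.1 ((hS.insert (x 0)).isBounded.subset hrange)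
  exact ⟨C, fun k => hC _ ⟨k, rfl⟩⟩

lemma mulV_mulV (M N : Matrix (Fin n) (Fin n) ℝ) (x : E n) :
    mulV M (mulV N x) = mulV (M * N) x := by
  simp only [mulV, toLpLin_apply, mulVec_mulVec]

lemma eq_mulV_inv_of_mulV_eq {M : Matrix (Fin n) (Fin n) ℝ} (hM : IsUnit M.det) {x y : E n}
    (h : mulV M x = y) : x = mulV M⁻¹ y := by
  rw [← h, mulV_mulV, nonsing_inv_mul _ hM]
  simp only [mulV, toLpLin_apply, one_mulVec, WithLp.toLp_ofLp]

lemma sgnPos_mem_Icc (x : E n) (i : Fin n) : sgnPos x i ∈ Set.Icc (0 : ℝ) 1 := by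
  unfold sgnPos
  split_ifs <;> norm_num

lemma finite_range_sgnPos : (Set.range (sgnPos : E n → Fin n → ℝ)).Finite :=
  (Set.Finite.pi' fun _ => ({0, 1} : Set ℝ).toFinite).subset <| by
    rintro _ ⟨x, rfl⟩ i
    unfold sgnPos
    split_ifs <;> simp

theorem stmt14 (Q A : Matrix (Fin n) (Fin n) ℝ) (hQ : Q.PosDef) (hA : IsUnit A.det)
    (b : E n) (x : ℕ → E n)
    (hrec : ∀ k, mulV ((A.transpose * Q * A - 1) * Matrix.diagonal (sgnPos (x k)) + 1)
        (x (k + 1)) = -(mulV A.transpose b)) :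
    ∃ C : ℝ, ∀ k, ‖x k‖ ≤ C := by
  have hP : (Aᵀ * Q * A).PosDef := by
    have hAinj : Function.Injective A.mulVec :=
      mulVec_injective_iff_isUnit.2 ((isUnit_iff_isUnit_det A).2 hA)
    simpa only [conjTranspose_eq_transpose_of_trivial] using hQ.conjTranspose_mul_mul_same hAinj
  let step : (Fin n → ℝ) → E n := fun d =>
    mulV ((Aᵀ * Q * A - 1) * diagonal d + 1)⁻¹ (-(mulV Aᵀ b))
  refine exists_norm_le_of_succ_mem_finite (finite_range_sgnPos.image step) fun k => ?_
  refine ⟨sgnPos (x k), Set.mem_range_self _, ?_⟩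
  exact (eq_mulV_inv_of_mulV_eq
    (hP.isUnit_det_sub_one_mul_diagonal_add_one (sgnPos_mem_Icc (x k))) (hrec k)).symm
end
end
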